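/- For a Bratteli diagram Br with potential F, the set of F-geodesics Geo^F(Br) is nonempty. -/

import Mathlib

open scoped BigOperators

/-- A Bratteli diagram: finite nonempty level sets `V n`, arrows `E n` from level `n`
to level `n+1`, a single root at level `0`, no sinks, and no sources besides the root. -/
structure Bratteli where
  V : ℕ → Type
  E : ℕ → Type
  instVFin : ∀ n, Fintype (V n)
  instEFin : ∀ n, Fintype (E n)
  instVNe : ∀ n, Nonempty (V n)
  instRoot : Subsingleton (V 0)
  src : ∀ n, E n → V n
  rng : ∀ n, E n → V (n + 1)
  noSink : ∀ n (v : V n), ∃ e : E n, src n e = v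
  noSource : ∀ n (v : V (n + 1)), ∃ e : E n, rng n e = v

attribute [instance] Bratteli.instVFin Bratteli.instEFin Bratteli.instVNe Bratteli.instRoot

/-- Finite paths of length `n` starting at the root. -/
abbrev Bratteli.FinPath (B : Bratteli) (n : ℕ) :=
  { p : ∀ i : Fin n, B.E i.val //
    ∀ (i : ℕ) (h : i + 1 < n),
      B.rng i (p ⟨i, Nat.lt_of_succ_lt h⟩) = B.src (i + 1) (p ⟨i + 1, h⟩) }

/-- Infinite paths starting at the root. -/
structure Bratteli.InfPath (B : Bratteli) where
  arrow : ∀ n, B.E n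
  compat : ∀ n, B.rng n (arrow n) = B.src (n + 1) (arrow (n + 1))

/-- The initial segment `p[1,n]` of an infinite path. -/
def Bratteli.InfPath.take {B : Bratteli} (p : B.InfPath) (n : ℕ) : B.FinPath n :=
  ⟨fun i => p.arrow i.val, fun i _ => p.compat i⟩

/-- The endpoint (range) of a finite path of positive length. -/
def pend {B : Bratteli} {n : ℕ} (μ : B.FinPath (n + 1)) : B.V (n + 1) :=
  B.rng n (μ.1 ⟨n, Nat.lt_succ_self n⟩)

/-- The vertex at level `n` through which a path of length `n+1` passes. -/
def through {B : Bratteli} {n : ℕ} (μ : B.FinPath (n + 1)) : B.V n :=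
  B.src n (μ.1 ⟨n, Nat.lt_succ_self n⟩)

/-- The value `F(μ) = Σ_i F(a_i)` of a potential on a finite path. -/
noncomputable def pathVal {B : Bratteli} (F : ∀ n, B.E n → ℝ) {n : ℕ}
    (μ : B.FinPath n) : ℝ :=
  ∑ i : Fin n, F i.val (μ.1 i)

/-- An infinite path `p` from the root is an `F`-geodesic when for every `n`,
`F(p[1,n]) ≤ F(μ)` for every length-`n` path `μ` from the root with the same endpoint. -/
def IsGeodesic {B : Bratteli} (F : ∀ n, B.E n → ℝ) (p : B.InfPath) : Prop :=
  ∀ (n : ℕ) (μ : B.FinPath (n + 1)), pend μ = pend (p.take (n + 1)) →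
    pathVal F (p.take (n + 1)) ≤ pathVal F μ

/-
Minimality passes to initial segments: if `μ[1,m]` could be replaced by a cheaper path `ν`
with the same endpoint, splicing `ν` onto the rest of `μ` would undercut `μ`. So the
minimal paths of each length form an inverse system of finite nonempty sets under
truncation, and Kőnig's lemma yields a compatible sequence of minimal paths, which is
the sequence of initial segments of a geodesic.
-/

namespace Bratteli

variable {B : Bratteli}

theorem nonempty_infPath (B : Bratteli) : Nonempty B.InfPath := by
  choose next hnext using fun n (e : B.E n) => B.noSink (n + 1) (B.rng n e)
  let arrow : ∀ n, B.E n := fun n =>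
    Nat.rec (motive := fun n => B.E n) (B.noSink 0 (Classical.arbitrary _)).choose next n
  exact ⟨⟨arrow, fun n => (hnext n (arrow n)).symm⟩⟩

namespace FinPath

def restrict {m n : ℕ} (h : m ≤ n) (μ : B.FinPath n) : B.FinPath m :=
  ⟨fun i => μ.1 ⟨i, i.2.trans_le h⟩, fun i hi => μ.2 i (hi.trans_le h)⟩

def splice {m n : ℕ} (ν : B.FinPath (m + 1)) (μ : B.FinPath (n + 1)) (h : m ≤ n)
    (hν : pend ν = pend (μ.restrict (Nat.succ_le_succ h))) : B.FinPath (n + 1) :=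
  ⟨fun i => if hi : i.val < m + 1 then ν.1 ⟨i, hi⟩ else μ.1 i, by
    intro i hi
    rcases lt_trichotomy i m with him | rfl | hmi
    · simpa [him, Nat.lt_succ_of_lt him] using ν.2 i (Nat.succ_lt_succ him)
    · simpa [pend] using hν.trans (μ.2 i hi)
    · simpa [hmi.not_gt, Nat.not_lt.2 hmi, Nat.not_lt.2 hmi.le] using μ.2 i hi⟩

theorem pend_splice {m n : ℕ} (ν : B.FinPath (m + 1)) (μ : B.FinPath (n + 1)) (h : m ≤ n)
    (hν : pend ν = pend (μ.restrict (Nat.succ_le_succ h))) : pend (ν.splice μ h hν) = pend μ := by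
  dsimp only [pend, splice]
  split_ifs with hn
  · obtain rfl : m = n := by omega
    exact hν
  · rfl

variable (F : ∀ n, B.E n → ℝ)

noncomputable def arrowVal {n : ℕ} (μ : B.FinPath n) (i : ℕ) : ℝ :=
  if h : i < n then F i (μ.1 ⟨i, h⟩) else 0

theorem pathVal_eq_sum_arrowVal {n N : ℕ} (μ : B.FinPath n) (hN : n ≤ N) :
    pathVal F μ = ∑ i ∈ Finset.range N, μ.arrowVal F i := by
  rw [pathVal, ← Finset.sum_range_add_sum_Ico _ hN, ← Fin.sum_univ_eq_sum_range,
    Finset.sum_eq_zero fun i hi => dif_neg (Finset.mem_Ico.1 hi).1.not_gt]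
  simp [arrowVal]

theorem pathVal_splice_add_pathVal_restrict {m n : ℕ} (ν : B.FinPath (m + 1))
    (μ : B.FinPath (n + 1)) (h : m ≤ n) (hν : pend ν = pend (μ.restrict (Nat.succ_le_succ h))) :
    pathVal F (ν.splice μ h hν) + pathVal F (μ.restrict (Nat.succ_le_succ h)) =
      pathVal F ν + pathVal F μ := by
  simp only [pathVal_eq_sum_arrowVal F _ (Nat.succ_le_succ h), pathVal_eq_sum_arrowVal F _ le_rfl,
    ← Finset.sum_add_distrib]
  refine Finset.sum_congr rfl fun i hi => ?_
  rw [Finset.mem_range] at hi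
  simp only [arrowVal, splice, restrict]
  split_ifs <;> ring

def IsMinimal {n : ℕ} (μ : B.FinPath (n + 1)) : Prop :=
  ∀ ν : B.FinPath (n + 1), pend ν = pend μ → pathVal F μ ≤ pathVal F ν

variable {F}

theorem IsMinimal.restrict {m n : ℕ} {μ : B.FinPath (n + 1)} (hμ : μ.IsMinimal F) (h : m ≤ n) :
    (μ.restrict (Nat.succ_le_succ h)).IsMinimal F := fun ν hν => by
  have := hμ (ν.splice μ h hν) (pend_splice ν μ h hν)
  linarith [pathVal_splice_add_pathVal_restrict F ν μ h hν]

variable (F) in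
theorem exists_isMinimal (n : ℕ) : ∃ μ : B.FinPath (n + 1), μ.IsMinimal F := by
  obtain ⟨p⟩ := B.nonempty_infPath
  obtain ⟨μ, hμ, hmin⟩ := Set.exists_min_image {ν | pend ν = pend (p.take (n + 1))}
    (pathVal F) (Set.toFinite _) ⟨_, rfl⟩
  exact ⟨μ, fun ν hν => hmin ν (hν.trans hμ)⟩

end FinPath

def InfPath.ofRestrict (f : ∀ n, B.FinPath (n + 1))
    (hf : ∀ ⦃i j⦄ (h : i ≤ j), (f j).restrict (Nat.succ_le_succ h) = f i) : B.InfPath where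
  arrow n := (f n).1 (Fin.last n)
  compat n := by
    rw [← hf n.le_succ]
    exact (f (n + 1)).2 n (Nat.lt_succ_self _)

theorem InfPath.take_ofRestrict (f : ∀ n, B.FinPath (n + 1))
    (hf : ∀ ⦃i j⦄ (h : i ≤ j), (f j).restrict (Nat.succ_le_succ h) = f i) (n : ℕ) :
    (InfPath.ofRestrict f hf).take (n + 1) = f n :=
  Subtype.ext <| funext fun i => by
    change (f i).1 (Fin.last i) = _
    rw [← hf (Nat.lt_succ_iff.1 i.2)]
    rfl

end Bratteli

theorem stmt_1 (B : Bratteli) (F : ∀ n, B.E n → ℝ) :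
    ∃ p : B.InfPath, IsGeodesic F p := by
  let α : ℕ → Type := fun n => {μ : B.FinPath (n + 1) // μ.IsMinimal F}
  have : ∀ n, Nonempty (α n) := fun n => nonempty_subtype.2 (Bratteli.FinPath.exists_isMinimal F n)
  obtain ⟨f, hf⟩ := exists_seq_forall_proj_of_forall_finite (α := α)
    (fun h μ => ⟨μ.1.restrict (Nat.succ_le_succ h), μ.2.restrict h⟩)
    (fun _ _ => rfl) (fun _ _ _ _ _ _ => rfl) (fun _ _ => Set.toFinite _)
  refine ⟨Bratteli.InfPath.ofRestrict (fun n => (f n).1) fun _ _ h => congrArg Subtype.val (hf h),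
    fun n => ?_⟩
  rw [Bratteli.InfPath.take_ofRestrict]
  exact (f n).2
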